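/- Let k ≥ 1 be an upper bound on the sizes of the members of 𝓑 and |𝓑| = m. Let T ⊆ 𝓑 × 𝓑 be a spanning in-arborescence of the body graph D_𝓑 of minimum total weight with respect to the weights w(B,B') = |B' \ B|. Then |Φ_T|_C ≤ ⌈log₂ k⌉ · OPT_C(𝓑) + max{0, m − k}. -/

import Mathlib

open Finset

variable {V : Type*} [Fintype V] [DecidableEq V]

/-- A pure Horn CNF is a finite set of clauses `(B, v)`: body `B`, head `v`,
with `B` nonempty and `v ∉ B`. -/
def PureHorn (Φ : Finset (Finset V × V)) : Prop :=
  ∀ c ∈ Φ, c.1.Nonempty ∧ c.2 ∉ c.1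

/-- A set `W` is closed under the clauses of `Φ`. -/
def HornClosed (Φ : Finset (Finset V × V)) (W : Set V) : Prop :=
  ∀ c ∈ Φ, ↑c.1 ⊆ W → c.2 ∈ W

/-- Forward-chaining closure `F_Φ(Z)`: the smallest set containing `Z`
that is closed under the clauses of `Φ`. -/
def hornClosure (Φ : Finset (Finset V × V)) (Z : Set V) : Set V :=
  ⋂₀ {W : Set V | Z ⊆ W ∧ HornClosed Φ W}

/-- `Ψ_𝓑 = ⋀_{B ∈ 𝓑} B → (V \ B)`. -/
def keyCNF (𝓑 : Finset (Finset V)) : Finset (Finset V × V) :=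
  𝓑.biUnion fun B => (Finset.univ \ B).image fun v => (B, v)

/-- `Φ` represents the key Horn function `h_𝓑`, i.e. `Φ` is a pure Horn CNF
equivalent to `Ψ_𝓑`. -/
def Represents (𝓑 : Finset (Finset V)) (Φ : Finset (Finset V × V)) : Prop :=
  PureHorn Φ ∧ ∀ Z : Finset V, hornClosure Φ ↑Z = hornClosure (keyCNF 𝓑) ↑Z

/-- (B) number of (distinct) bodies. -/
def sizeB (Φ : Finset (Finset V × V)) : ℕ := (Φ.image Prod.fst).card
/-- (BA) body area `Σ_i |B_i|` over the distinct bodies. -/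
def sizeBA (Φ : Finset (Finset V × V)) : ℕ := ∑ B ∈ Φ.image Prod.fst, B.card
/-- (C) number of clauses `Σ_i |H_i|`. -/
def sizeC (Φ : Finset (Finset V × V)) : ℕ := Φ.card
/-- (TA) total area `Σ_i (|B_i| + |H_i|)`. -/
def sizeTA (Φ : Finset (Finset V × V)) : ℕ := sizeBA Φ + sizeC Φ
/-- (BC) bodies plus clauses `Σ_i (|H_i| + 1)`. -/
def sizeBC (Φ : Finset (Finset V × V)) : ℕ := sizeB Φ + sizeC Φ
/-- (L) number of literals `Σ_i (|B_i| + 1)·|H_i|`. -/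
def sizeL (Φ : Finset (Finset V × V)) : ℕ := ∑ c ∈ Φ, (c.1.card + 1)

/-- `μ` is one of the six size measures. -/
def IsMeasure (μ : Finset (Finset V × V) → ℕ) : Prop :=
  μ = sizeB ∨ μ = sizeBA ∨ μ = sizeTA ∨ μ = sizeC ∨ μ = sizeBC ∨ μ = sizeL

/-- `OPT_μ(𝓑)`: minimum `μ`-size of a CNF representing `h_𝓑`. -/
noncomputable def OPT (μ : Finset (Finset V × V) → ℕ) (𝓑 : Finset (Finset V)) : ℕ :=
  sInf {s : ℕ | ∃ Φ : Finset (Finset V × V), Represents 𝓑 Φ ∧ μ Φ = s}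

/-- `price_μ(S,T)`: minimum `μ`-size of a pure Horn CNF with bodies in `𝓑`
whose forward chaining from `S` reaches all of `T`. -/
noncomputable def price (μ : Finset (Finset V × V) → ℕ) (𝓑 : Finset (Finset V))
    (S T : Finset V) : ℕ :=
  sInf {s : ℕ | ∃ Φ : Finset (Finset V × V),
    PureHorn Φ ∧ (∀ c ∈ Φ, c.1 ∈ 𝓑) ∧ ↑T ⊆ hornClosure Φ ↑S ∧ μ Φ = s}

/-!
Fix an optimal CNF `Ψ` for `h_𝓑` and grow an in-forest on `𝓑`, starting with every body as its
own root. Forward chaining with `Ψ` from a root `r` derives everything, so it must eventually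
derive a body `B'` outside the tree of `r`; until then it fires only clauses whose bodies contain
members of that tree alone, and each firing adds one variable, so the arc `r → B'` costs at most
the number of clauses owned by the tree. Since every clause body contains a member of `𝓑`,
distinct trees own disjoint clauses, and a round of such links costs at most `|Ψ|`. Linking the
roots in a matching-like order at least halves the number of trees per round, so after
`⌈log₂ k⌉` rounds at most `m / k` trees remain, and joining these directly costs at most `k` per
arc. The minimum-weight arborescence `T` is no heavier, and `|Φ_T|_C` is exactly its weight.
-/

section HornClosure

variable {α : Type*}

lemma subset_hornClosure (Φ : Finset (Finset α × α)) (Z : Set α) : Z ⊆ hornClosure Φ Z :=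
  fun _ hx => Set.mem_sInter.2 fun _ hW => hW.1 hx

lemma hornClosed_hornClosure (Φ : Finset (Finset α × α)) (Z : Set α) :
    HornClosed Φ (hornClosure Φ Z) := fun c hc hbody =>
  Set.mem_sInter.2 fun _ hW => hW.2 c hc (hbody.trans (Set.sInter_subset_of_mem hW))

lemma hornClosure_subset {Φ : Finset (Finset α × α)} {Z W : Set α}
    (hZ : Z ⊆ W) (hW : HornClosed Φ W) : hornClosure Φ Z ⊆ W :=
  Set.sInter_subset_of_mem ⟨hZ, hW⟩

variable [DecidableEq α]

lemma hornClosure_subset_union_heads (Φ : Finset (Finset α × α)) (Z : Finset α) :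
    hornClosure Φ ↑Z ⊆ ↑(Z ∪ Φ.image Prod.snd) := by
  refine hornClosure_subset (by simp) fun c hc _ => ?_
  simp only [coe_union, coe_image, Set.mem_union, Set.mem_image, mem_coe]
  exact Or.inr ⟨c, hc, rfl⟩

/-- The clauses `U` of `Ψ` whose bodies contain only members in `p` derive a member outside `p`
from `Z`, since otherwise their closure of `Z` would be closed under all of `Ψ`; each clause of `U`
adds at most one variable. -/
lemma exists_mem_not_card_sdiff_le {𝓑 : Finset (Finset α)} {Ψ : Finset (Finset α × α)}
    {Z : Finset α} (hZ : hornClosure Ψ ↑Z = Set.univ) (p : Finset α → Prop)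
    (hp : ∃ B ∈ 𝓑, ¬ p B) :
    ∃ B ∈ 𝓑, ¬ p B ∧ ∃ U ⊆ Ψ, (∀ c ∈ U, ∀ B' ∈ 𝓑, B' ⊆ c.1 → p B') ∧
      (B \ Z).card ≤ U.card := by
  classical
  set U := Ψ.filter fun c => ∀ B' ∈ 𝓑, B' ⊆ c.1 → p B'
  obtain ⟨B, hB, hpB, hBU⟩ : ∃ B ∈ 𝓑, ¬ p B ∧ ↑B ⊆ hornClosure U ↑Z := by
    by_contra! hnone
    have hclosed : HornClosed Ψ (hornClosure U ↑Z) := by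
      intro c hc hbody
      by_cases hcU : ∀ B' ∈ 𝓑, B' ⊆ c.1 → p B'
      · exact hornClosed_hornClosure U _ c (mem_filter.2 ⟨hc, hcU⟩) hbody
      · push Not at hcU
        obtain ⟨B', hB', hB'c, hpB'⟩ := hcU
        exact absurd ((coe_subset.2 hB'c).trans hbody) (hnone B' hB' hpB')
    obtain ⟨B, hB, hpB⟩ := hp
    exact hnone B hB hpB fun x _ =>
      hornClosure_subset (subset_hornClosure _ _) hclosed (hZ ▸ Set.mem_univ x)
  refine ⟨B, hB, hpB, U, filter_subset _ _, fun c hc => (mem_filter.1 hc).2, ?_⟩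
  have hnew : B \ Z ⊆ U.image Prod.snd := fun x hx => by
    obtain ⟨hxB, hxZ⟩ := mem_sdiff.1 hx
    simpa [hxZ] using hornClosure_subset_union_heads U Z (hBU hxB)
  exact (card_le_card hnew).trans card_image_le

end HornClosure

lemma mem_keyCNF {𝓑 : Finset (Finset V)} {c : Finset V × V} :
    c ∈ keyCNF 𝓑 ↔ c.1 ∈ 𝓑 ∧ c.2 ∉ c.1 := by
  obtain ⟨B, v⟩ := c
  simp [keyCNF, and_comm]

lemma hornClosure_keyCNF_of_mem {𝓑 : Finset (Finset V)} {B : Finset V} (hB : B ∈ 𝓑) :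
    hornClosure (keyCNF 𝓑) ↑B = Set.univ := by
  refine Set.eq_univ_of_forall fun x => ?_
  by_cases hx : x ∈ B
  · exact subset_hornClosure _ _ hx
  · exact hornClosed_hornClosure _ _ (B, x) (mem_keyCNF.2 ⟨hB, hx⟩) (subset_hornClosure _ _)

lemma hornClosure_keyCNF_of_forall_not_subset {𝓑 : Finset (Finset V)} {Z : Finset V}
    (hZ : ∀ B ∈ 𝓑, ¬ B ⊆ Z) : hornClosure (keyCNF 𝓑) ↑Z = ↑Z := by
  refine (hornClosure_subset subset_rfl fun c hc hbody => ?_).antisymm (subset_hornClosure _ _)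
  exact absurd (coe_subset.1 hbody) (hZ c.1 (mem_keyCNF.1 hc).1)

lemma keyCNF_represents {𝓑 : Finset (Finset V)} (hne : ∀ B ∈ 𝓑, B.Nonempty) :
    Represents 𝓑 (keyCNF 𝓑) :=
  ⟨fun _ hc => ⟨hne _ (mem_keyCNF.1 hc).1, (mem_keyCNF.1 hc).2⟩, fun _ => rfl⟩

lemma exists_represents_card_eq_OPT {𝓑 : Finset (Finset V)} (hne : ∀ B ∈ 𝓑, B.Nonempty) :
    ∃ Ψ, Represents 𝓑 Ψ ∧ Ψ.card = OPT sizeC 𝓑 :=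
  Nat.sInf_mem (s := {s | ∃ Ψ, Represents 𝓑 Ψ ∧ sizeC Ψ = s})
    ⟨_, keyCNF 𝓑, keyCNF_represents hne, rfl⟩

namespace Represents

variable {𝓑 : Finset (Finset V)} {Φ : Finset (Finset V × V)}

lemma hornClosure_eq_univ (hΦ : Represents 𝓑 Φ) {B : Finset V} (hB : B ∈ 𝓑) :
    hornClosure Φ ↑B = Set.univ := by
  rw [hΦ.2, hornClosure_keyCNF_of_mem hB]

lemma exists_mem_subset_body (hΦ : Represents 𝓑 Φ) {c : Finset V × V} (hc : c ∈ Φ) :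
    ∃ B ∈ 𝓑, B ⊆ c.1 := by
  by_contra! hnone
  have hhead := hornClosed_hornClosure Φ (c.1 : Set V) c hc (subset_hornClosure Φ _)
  rw [hΦ.2, hornClosure_keyCNF_of_forall_not_subset hnone] at hhead
  exact (hΦ.1 c hc).2 hhead

end Represents

section Forest

variable {α : Type*}

def Reaches (g : α → α) (a b : α) : Prop := ∃ j, g^[j] a = b

lemma Reaches.refl (g : α → α) (a : α) : Reaches g a a := ⟨0, rfl⟩

lemma Reaches.of_apply {g : α → α} {a b : α} (h : Reaches g (g a) b) : Reaches g a b :=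
  let ⟨j, hj⟩ := h
  ⟨j + 1, by rwa [Function.iterate_succ_apply]⟩

structure IsRootedForest (S roots : Finset α) (g : α → α) : Prop where
  roots_subset : roots ⊆ S
  mapsTo : ∀ a ∈ S, g a ∈ S
  map_root : ∀ r ∈ roots, g r = r
  exists_root : ∀ a ∈ S, ∃ r ∈ roots, Reaches g a r

namespace IsRootedForest

variable {S roots : Finset α} {g : α → α}

lemma eq_of_reaches (h : IsRootedForest S roots g) {a r₁ r₂ : α} (hr₁ : r₁ ∈ roots)
    (hr₂ : r₂ ∈ roots) (h₁ : Reaches g a r₁) (h₂ : Reaches g a r₂) : r₁ = r₂ := by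
  obtain ⟨j₁, hj₁⟩ := h₁
  obtain ⟨j₂, hj₂⟩ := h₂
  rcases le_total j₁ j₂ with hle | hle
  · rw [← Nat.sub_add_cancel hle, Function.iterate_add_apply, hj₁,
      Function.iterate_fixed (h.map_root r₁ hr₁)] at hj₂
    exact hj₂
  · rw [← Nat.sub_add_cancel hle, Function.iterate_add_apply, hj₂,
      Function.iterate_fixed (h.map_root r₂ hr₂)] at hj₁
    exact hj₁.symm

end IsRootedForest

variable [DecidableEq α]

lemma iterate_update_of_not_reaches {g : α → α} {a r : α} (b : α) (h : ¬ Reaches g a r)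
    (n : ℕ) : (Function.update g r b)^[n] a = g^[n] a := by
  induction n generalizing a with
  | zero => rfl
  | succ n ih =>
    have har : a ≠ r := fun e => h ⟨0, e⟩
    rw [Function.iterate_succ_apply, Function.iterate_succ_apply, Function.update_of_ne har]
    exact ih fun hr => h hr.of_apply

lemma Reaches.update_of_not_reaches {g : α → α} {a r c : α} (b : α) (hac : Reaches g a c)
    (har : ¬ Reaches g a r) : Reaches (Function.update g r b) a c :=
  let ⟨j, hj⟩ := hac
  ⟨j, by rw [iterate_update_of_not_reaches b har, hj]⟩

lemma Reaches.update_through {g : α → α} {a r b c : α} (har : Reaches g a r)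
    (hbc : Reaches (Function.update g r b) b c) : Reaches (Function.update g r b) a c := by
  obtain ⟨j, hj⟩ := har
  induction j generalizing a with
  | zero =>
    obtain rfl : a = r := hj
    exact .of_apply (by rwa [Function.update_self])
  | succ j ih =>
    rcases eq_or_ne a r with rfl | har
    · exact .of_apply (by rwa [Function.update_self])
    · rw [Function.iterate_succ_apply] at hj
      exact .of_apply (by rw [Function.update_of_ne har]; exact ih hj)

namespace IsRootedForest

variable {S roots : Finset α} {g : α → α}

lemma link (h : IsRootedForest S roots g) {r b : α} (hr : r ∈ roots) (hb : b ∈ S)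
    (hbr : ¬ Reaches g b r) : IsRootedForest S (roots.erase r) (Function.update g r b) where
  roots_subset := (erase_subset r roots).trans h.roots_subset
  mapsTo a ha := by
    rcases eq_or_ne a r with rfl | har
    · rwa [Function.update_self]
    · rw [Function.update_of_ne har]
      exact h.mapsTo a ha
  map_root a ha := by
    rw [Function.update_of_ne (ne_of_mem_erase ha)]
    exact h.map_root a (mem_of_mem_erase ha)
  exists_root a ha := by
    by_cases har : Reaches g a r
    · obtain ⟨rb, hrb, hbrb⟩ := h.exists_root b hb
      exact ⟨rb, mem_erase.2 ⟨fun e => hbr (e ▸ hbrb), hrb⟩,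
        har.update_through (hbrb.update_of_not_reaches b hbr)⟩
    · obtain ⟨ra, hra, hara⟩ := h.exists_root a ha
      exact ⟨ra, mem_erase.2 ⟨fun e => har (e ▸ hara), hra⟩, hara.update_of_not_reaches b har⟩

lemma reaches_of_reaches_link (h : IsRootedForest S roots g) {r b : α} (hr : r ∈ roots)
    (hb : b ∈ S) (hbr : ¬ Reaches g b r) {a r' : α} (hr' : r' ∈ roots.erase r)
    (hbr' : ¬ Reaches g b r') (har' : Reaches (Function.update g r b) a r') :
    Reaches g a r' := by
  by_cases har : Reaches g a r
  · obtain ⟨rb, hrb, hbrb⟩ := h.exists_root b hb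
    have harb := har.update_through (hbrb.update_of_not_reaches b hbr)
    have hr'rb := (h.link hr hb hbr).eq_of_reaches hr'
      (mem_erase.2 ⟨fun e => hbr (e ▸ hbrb), hrb⟩) har' harb
    exact absurd (hr'rb ▸ hbrb) hbr'
  · obtain ⟨j, hj⟩ := har'
    exact ⟨j, by rwa [iterate_update_of_not_reaches b har] at hj⟩

end IsRootedForest

end Forest

/-- The weight of the arcs `B → g B` under `w(B, B') = |B' \ B|`; a root is a loop of weight `0`. -/
def forestWeight (𝓑 : Finset (Finset V)) (g : Finset V → Finset V) : ℕ :=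
  ∑ B ∈ 𝓑, (g B \ B).card

lemma forestWeight_id (𝓑 : Finset (Finset V)) : forestWeight 𝓑 id = 0 := by
  simp [forestWeight]

lemma forestWeight_update {𝓑 : Finset (Finset V)} {g : Finset V → Finset V} {r : Finset V}
    (hr : r ∈ 𝓑) (hgr : g r = r) (b : Finset V) :
    forestWeight 𝓑 (Function.update g r b) = forestWeight 𝓑 g + (b \ r).card := by
  unfold forestWeight
  rw [← sum_erase_add _ _ hr, ← sum_erase_add _ _ hr, Function.update_self, hgr, sdiff_self,
    bot_eq_empty, card_empty, add_zero]
  congr 1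
  exact sum_congr rfl fun B hB => by rw [Function.update_of_ne (ne_of_mem_erase hB)]

namespace IsRootedForest

variable {𝓑 roots : Finset (Finset V)} {g : Finset V → Finset V}

/-- Once `r` is linked to `t r`, the root of `t r` leaves `P` too: each link uses up at most two
members of `P`, and the trees of the members left in `P` are untouched. -/
lemma exists_merge (h : IsRootedForest 𝓑 roots g) {P : Finset (Finset V)} (hP : P ⊆ roots)
    {t : Finset V → Finset V} (ht : ∀ r ∈ P, t r ∈ 𝓑 ∧ ¬ Reaches g (t r) r) :
    ∃ roots' g', IsRootedForest 𝓑 roots' g' ∧ 2 * roots'.card + P.card ≤ 2 * roots.card ∧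
      forestWeight 𝓑 g' ≤ forestWeight 𝓑 g + ∑ r ∈ P, (t r \ r).card := by
  induction P using Finset.strongInduction generalizing roots g with
  | H P ih =>
  rcases P.eq_empty_or_nonempty with rfl | ⟨r, hrP⟩
  · exact ⟨roots, g, h, by simp, by simp⟩
  obtain ⟨htr, htrr⟩ := ht r hrP
  have hr := hP hrP
  obtain ⟨r₁, hr₁, htrr₁⟩ := h.exists_root _ htr
  set P' := (P.erase r).erase r₁
  have hP' : P' ⊆ roots.erase r := (erase_subset _ _).trans (erase_subset_erase r hP)
  have ht' : ∀ r' ∈ P', t r' ∈ 𝓑 ∧ ¬ Reaches (Function.update g r (t r)) (t r') r' := by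
    intro r' hr'
    have hr'P : r' ∈ P := mem_of_mem_erase (mem_of_mem_erase hr')
    have htr'r₁ : ¬ Reaches g (t r) r' := fun h' =>
      ne_of_mem_erase hr' (h.eq_of_reaches (hP hr'P) hr₁ h' htrr₁)
    exact ⟨(ht r' hr'P).1, fun h' => (ht r' hr'P).2
      (h.reaches_of_reaches_link hr htr htrr (hP' hr') htr'r₁ h')⟩
  obtain ⟨roots', g', h', hcard, hw⟩ :=
    ih P' ((erase_subset _ _).trans_ssubset (erase_ssubset hrP)) (h.link hr htr htrr) hP' ht'
  refine ⟨roots', g', h', ?_, ?_⟩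
  · have := card_erase_of_mem hr
    have := card_erase_of_mem hrP
    have : (P.erase r).card - 1 ≤ P'.card := pred_card_le_card_erase
    have := card_pos.2 ⟨r, hr⟩
    omega
  · have hsum : ∑ r' ∈ P', (t r' \ r').card + (t r \ r).card ≤ ∑ r' ∈ P, (t r' \ r').card := by
      have hrP' : r ∉ P' := fun h => ne_of_mem_erase (mem_of_mem_erase h) rfl
      calc _ = ∑ r' ∈ insert r P', (t r' \ r').card := by rw [sum_insert hrP', add_comm]
        _ ≤ _ := sum_le_sum_of_subset
          (insert_subset hrP ((erase_subset _ _).trans (erase_subset _ _)))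
    rw [forestWeight_update (h.roots_subset hr) (h.map_root r hr)] at hw
    omega

variable {Ψ : Finset (Finset V × V)}

lemma exists_targets_sum_le (h : IsRootedForest 𝓑 roots g) (hΨ : Represents 𝓑 Ψ)
    (hroots : 1 < roots.card) :
    ∃ t : Finset V → Finset V, (∀ r ∈ roots, t r ∈ 𝓑 ∧ ¬ Reaches g (t r) r) ∧
      ∑ r ∈ roots, (t r \ r).card ≤ Ψ.card := by
  have hescape : ∀ r, ∃ (b : Finset V) (U : Finset (Finset V × V)), r ∈ roots →
      b ∈ 𝓑 ∧ ¬ Reaches g b r ∧ U ⊆ Ψ ∧ (∀ c ∈ U, ∀ B ∈ 𝓑, B ⊆ c.1 → Reaches g B r) ∧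
        (b \ r).card ≤ U.card := by
    intro r
    by_cases hr : r ∈ roots
    · obtain ⟨r', hr', hr'r⟩ := exists_mem_ne hroots r
      have hout : ∃ B ∈ 𝓑, ¬ Reaches g B r := ⟨r', h.roots_subset hr',
        fun h' => hr'r (h.eq_of_reaches hr' hr (.refl g r') h')⟩
      obtain ⟨b, hb, hbr, U, hUΨ, hU, hcard⟩ := exists_mem_not_card_sdiff_le
        (hΨ.hornClosure_eq_univ (h.roots_subset hr)) (Reaches g · r) hout
      exact ⟨b, U, fun _ => ⟨hb, hbr, hUΨ, hU, hcard⟩⟩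
    · exact ⟨∅, ∅, fun hr' => absurd hr' hr⟩
  choose t U ht htr hUΨ hU hcard using hescape
  have hdisj : (roots : Set (Finset V)).PairwiseDisjoint U := by
    intro r hr r' hr' hne
    refine disjoint_left.2 fun c hc hc' => hne ?_
    obtain ⟨B, hB, hBc⟩ := hΨ.exists_mem_subset_body (hUΨ r hr hc)
    exact h.eq_of_reaches hr hr' (hU r hr c hc B hB hBc) (hU r' hr' c hc' B hB hBc)
  refine ⟨t, fun r hr => ⟨ht r hr, htr r hr⟩, ?_⟩
  calc ∑ r ∈ roots, (t r \ r).card ≤ ∑ r ∈ roots, (U r).card := sum_le_sum hcard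
    _ = (roots.biUnion U).card := (card_biUnion hdisj).symm
    _ ≤ Ψ.card := card_le_card (biUnion_subset.2 hUΨ)

lemma exists_rounds (h : IsRootedForest 𝓑 roots g) (hΨ : Represents 𝓑 Ψ) (ℓ : ℕ) :
    ∃ roots' g', IsRootedForest 𝓑 roots' g' ∧
      (roots'.card ≤ 1 ∨ roots'.card * 2 ^ ℓ ≤ roots.card) ∧
      forestWeight 𝓑 g' ≤ forestWeight 𝓑 g + ℓ * Ψ.card := by
  induction ℓ generalizing roots g with
  | zero => exact ⟨roots, g, h, Or.inr (by simp), by simp⟩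
  | succ ℓ ih =>
    rcases le_or_gt roots.card 1 with hroots | hroots
    · exact ⟨roots, g, h, Or.inl hroots, le_add_right le_rfl⟩
    obtain ⟨t, ht, hsum⟩ := h.exists_targets_sum_le hΨ hroots
    obtain ⟨roots₁, g₁, h₁, hcard₁, hw₁⟩ := h.exists_merge subset_rfl ht
    obtain ⟨roots', g', h', hcard', hw'⟩ := ih h₁
    refine ⟨roots', g', h', hcard'.imp_right fun hc => ?_, ?_⟩
    · rw [pow_succ, ← mul_assoc]
      omega
    · rw [Nat.succ_mul]
      omega

lemma exists_singleton_root (h : IsRootedForest 𝓑 roots g) (hne : roots.Nonempty) {k : ℕ}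
    (hk : ∀ B ∈ 𝓑, B.card ≤ k) :
    ∃ R g', IsRootedForest 𝓑 {R} g' ∧
      forestWeight 𝓑 g' ≤ forestWeight 𝓑 g + (roots.card - 1) * k := by
  induction roots using Finset.strongInduction generalizing g with
  | H roots ih =>
  obtain ⟨r, hr⟩ := hne
  rcases (roots.erase r).eq_empty_or_nonempty with hempty | ⟨r', hr'⟩
  · have hsingle : roots = {r} := by rw [← insert_erase hr, hempty, insert_empty]
    exact ⟨r, g, hsingle ▸ h, by simp [hsingle]⟩
  have hr'r : ¬ Reaches g r' r := fun h' =>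
    ne_of_mem_erase hr' (h.eq_of_reaches (mem_of_mem_erase hr') hr (.refl g r') h')
  have h₁ := h.link hr (h.roots_subset (mem_of_mem_erase hr')) hr'r
  obtain ⟨R, g', h', hw'⟩ := ih _ (erase_ssubset hr) h₁ ⟨r', hr'⟩
  refine ⟨R, g', h', ?_⟩
  have harc : (r' \ r).card ≤ k :=
    (card_le_card sdiff_subset).trans (hk r' (h.roots_subset (mem_of_mem_erase hr')))
  have hcard : (roots.card - 1) * k = ((roots.erase r).card - 1) * k + k := by
    rw [card_erase_of_mem hr, ← Nat.succ_mul]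
    congr 1
    have := card_pos.2 ⟨r', hr'⟩
    rw [card_erase_of_mem hr] at this
    omega
  rw [forestWeight_update (h.roots_subset hr) (h.map_root r hr)] at hw'
  omega

end IsRootedForest

lemma card_biUnion_image_pair {ι β : Type*} [DecidableEq ι] [DecidableEq β] (s : Finset ι)
    (H : ι → Finset β) :
    (s.biUnion fun B => (H B).image fun v => (B, v)).card = ∑ B ∈ s, (H B).card := by
  rw [card_biUnion]
  · exact sum_congr rfl fun B _ => card_image_of_injective _ (Prod.mk_right_injective B)
  · intro B _ B' _ hne
    simp only [Function.onFun, disjoint_left, mem_image]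
    rintro _ ⟨v, -, rfl⟩ ⟨v', -, hv'⟩
    exact hne (congrArg Prod.fst hv').symm

lemma sub_one_mul_le_sub {q k m ℓ : ℕ} (hq : q ≤ 1 ∨ q * 2 ^ ℓ ≤ m) (hk : k ≤ 2 ^ ℓ) :
    (q - 1) * k ≤ m - k := by
  rcases hq with hq | hq
  · simp [Nat.sub_eq_zero_of_le hq]
  · have hqk : q * k ≤ m := (Nat.mul_le_mul_left q hk).trans hq
    rw [Nat.sub_one_mul]
    omega

/-- The arborescence `T` is given by its root `R` and its parent map `f`. -/
theorem stmt7_general {V : Type*} [Fintype V] [DecidableEq V]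
    (𝓑 : Finset (Finset V))
    (hne : ∀ B ∈ 𝓑, B.Nonempty)
    (k m : ℕ) (hk : ∀ B ∈ 𝓑, B.card ≤ k) (hm : 𝓑.card = m)
    (R : Finset V) (hR : R ∈ 𝓑) (f : Finset V → Finset V)
    (hminwt : ∀ R' ∈ 𝓑, ∀ g : Finset V → Finset V,
      (∀ B ∈ 𝓑, B ≠ R' → g B ∈ 𝓑) → (∀ B ∈ 𝓑, ∃ j : ℕ, g^[j] B = R') →
      ∑ B ∈ 𝓑.erase R, (f B \ B).card ≤ ∑ B ∈ 𝓑.erase R', (g B \ B).card)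
    (Φ : Finset (Finset V × V))
    (hΦ : Φ = (𝓑.erase R).biUnion fun B => (f B \ B).image fun v => (B, v)) :
    sizeC Φ ≤ Nat.clog 2 k * OPT sizeC 𝓑 + (m - k) := by
  obtain ⟨Ψ, hΨ, hΨcard⟩ := exists_represents_card_eq_OPT hne
  have hdiscrete : IsRootedForest 𝓑 𝓑 id :=
    ⟨subset_rfl, fun _ hB => hB, fun _ _ => rfl, fun B hB => ⟨B, hB, .refl id B⟩⟩
  obtain ⟨roots, g, hg, hcard, hwg⟩ := hdiscrete.exists_rounds hΨ (Nat.clog 2 k)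
  obtain ⟨r, hr, -⟩ := hg.exists_root R hR
  obtain ⟨R', g', hg', hwg'⟩ := hg.exists_singleton_root ⟨r, hr⟩ hk
  have hjoin := sub_one_mul_le_sub (hm ▸ hcard) (Nat.le_pow_clog one_lt_two k)
  have hT_le : ∑ B ∈ 𝓑.erase R, (f B \ B).card ≤ ∑ B ∈ 𝓑.erase R', (g' B \ B).card := by
    refine hminwt R' (hg'.roots_subset (mem_singleton_self R')) g'
      (fun B hB _ => hg'.mapsTo B hB) fun B hB => ?_
    obtain ⟨r', hr', hBr'⟩ := hg'.exists_root B hB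
    exact mem_singleton.1 hr' ▸ hBr'
  calc sizeC Φ = ∑ B ∈ 𝓑.erase R, (f B \ B).card := by rw [hΦ, sizeC, card_biUnion_image_pair]
    _ ≤ forestWeight 𝓑 g' := hT_le.trans (sum_le_sum_of_subset (erase_subset _ _))
    _ ≤ Nat.clog 2 k * OPT sizeC 𝓑 + (m - k) := by
      rw [forestWeight_id, hΨcard] at hwg
      omega

/-- If `T` is a minimum-weight spanning in-arborescence of the body graph
with arc weights `w(B,B') = |B' \ B|` (encoded by a root `R ∈ 𝓑` and a parent
map `f`), then `|Φ_T|_C ≤ ⌈log₂ k⌉ · OPT_C(𝓑) + max{0, m - k}`. -/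
theorem stmt7 {V : Type*} [Fintype V] [DecidableEq V]
    (𝓑 : Finset (Finset V))
    (hne : ∀ B ∈ 𝓑, B.Nonempty) (hproper : ∀ B ∈ 𝓑, B ≠ Finset.univ)
    (hsperner : ∀ B ∈ 𝓑, ∀ B' ∈ 𝓑, B ⊆ B' → B = B')
    (hcover : ∀ v : V, ∃ B ∈ 𝓑, v ∈ B)
    (hinter : ∀ v : V, ∃ B ∈ 𝓑, v ∉ B)
    (k m : ℕ) (hk1 : 1 ≤ k) (hk : ∀ B ∈ 𝓑, B.card ≤ k) (hm : 𝓑.card = m)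
    (R : Finset V) (hR : R ∈ 𝓑) (f : Finset V → Finset V)
    (hf : ∀ B ∈ 𝓑, B ≠ R → f B ∈ 𝓑)
    (hreach : ∀ B ∈ 𝓑, ∃ j : ℕ, f^[j] B = R)
    (hminwt : ∀ R' ∈ 𝓑, ∀ g : Finset V → Finset V,
      (∀ B ∈ 𝓑, B ≠ R' → g B ∈ 𝓑) → (∀ B ∈ 𝓑, ∃ j : ℕ, g^[j] B = R') →
      ∑ B ∈ 𝓑.erase R, (f B \ B).card ≤ ∑ B ∈ 𝓑.erase R', (g B \ B).card)
    (Φ : Finset (Finset V × V))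
    (hΦ : Φ = (𝓑.erase R).biUnion fun B => (f B \ B).image fun v => (B, v)) :
    sizeC Φ ≤ Nat.clog 2 k * OPT sizeC 𝓑 + (m - k) :=
  stmt7_general 𝓑 hne k m hk hm R hR f hminwt Φ hΦ
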